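/- arXiv:2504.09368 — 7 statements merged into one kernel-verified Lean document; each statement's English description precedes it below -/
import Mathlib

section
/- Let Q be a rack. The right multiplication group Rmlt(Q) is abelian if and only if x*(y*z) = x*y holds for all x, y, z in Q. -/
/-- A (right) rack: a set with a binary operation `mul` such that every right
translation `R_x : y ↦ y * x` is a bijection (with inverse given by the right
division `div`), satisfying right self-distributivity. -/
class RightRack (Q : Type*) where
  mul : Q → Q → Q
  div : Q → Q → Q
  div_mul : ∀ x y : Q, mul (div x y) y = x
  mul_div : ∀ x y : Q, div (mul x y) y = x
  self_distrib : ∀ x y z : Q, mul (mul x y) z = mul (mul x z) (mul y z)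

namespace RightRack

/-- The right translation `R_x` as a permutation of `Q`. -/
def rt {Q : Type*} [RightRack Q] (x : Q) : Equiv.Perm Q where
  toFun y := mul y x
  invFun y := div y x
  left_inv y := mul_div y x
  right_inv y := div_mul y x

/-- The right multiplication group `Rmlt(Q)`: the subgroup of the symmetric group
on `Q` generated by all right translations. -/
def rmlt (Q : Type*) [RightRack Q] : Subgroup (Equiv.Perm Q) :=
  Subgroup.closure (Set.range (rt : Q → Equiv.Perm Q))

end RightRack

/-- A quandle: an idempotent rack. -/
class RightQuandle (Q : Type*) extends RightRack Q where
  idem : ∀ x : Q, mul x x = x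

namespace RightRack

variable {Q : Type*} [RightRack Q]

lemma rt_mem_rmlt (x : Q) : rt x ∈ rmlt Q :=
  Subgroup.subset_closure (Set.mem_range_self x)

lemma rt_eq_rt_iff {u v : Q} : rt u = rt v ↔ ∀ x, mul x u = mul x v :=
  Equiv.ext_iff

/-- Self-distributivity says exactly that conjugating `R_y` by `R_z` gives `R_{y*z}`. -/
lemma rt_mul_rt (y z : Q) : rt z * rt y = rt (mul y z) * rt z :=
  Equiv.ext fun a ↦ self_distrib a y z

lemma rt_mul_rt_comm_iff (y z : Q) : rt z * rt y = rt y * rt z ↔ rt (mul y z) = rt y := by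
  rw [rt_mul_rt, mul_left_inj]

lemma rmlt_comm_iff_rt_comm :
    (∀ g ∈ rmlt Q, ∀ h ∈ rmlt Q, g * h = h * g) ↔ ∀ y z : Q, rt z * rt y = rt y * rt z := by
  refine ⟨fun h y z ↦ h _ (rt_mem_rmlt z) _ (rt_mem_rmlt y), fun h ↦ ?_⟩
  refine isMulCommutative_iff_of_setLike.mp (Subgroup.isMulCommutative_closure ?_)
  rintro _ ⟨y, rfl⟩ _ ⟨z, rfl⟩
  exact h z y

end RightRack

/-- Let `Q` be a rack. The right multiplication group `Rmlt(Q)` is abelian if and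
only if `x*(y*z) = x*y` holds for all `x, y, z` in `Q`. -/
theorem rmlt_abelian_iff_absorb {Q : Type*} [RightRack Q] :
    (∀ g ∈ RightRack.rmlt Q, ∀ h ∈ RightRack.rmlt Q, g * h = h * g) ↔
      (∀ x y z : Q, RightRack.mul x (RightRack.mul y z) = RightRack.mul x y) := by
  simp only [RightRack.rmlt_comm_iff_rt_comm, RightRack.rt_mul_rt_comm_iff, RightRack.rt_eq_rt_iff]
  exact ⟨fun h x y z ↦ h y z x, fun h y z x ↦ h x y z⟩
end

section
/- A quandle is graphic if and only if it is paragraphic. -/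
namespace RightQuandle

theorem flexible {Q : Type*} [RightQuandle Q] (x y : Q) :
    RightRack.mul (RightRack.mul x y) x = RightRack.mul x (RightRack.mul y x) := by
  rw [RightRack.self_distrib, idem]

end RightQuandle

/-- A quandle is graphic (`(x*y)*x = x*y`) if and only if it is paragraphic
(`x*(y*x) = x*y`). -/
theorem quandle_graphic_iff_paragraphic {Q : Type*} [RightQuandle Q] :
    (∀ x y : Q, RightRack.mul (RightRack.mul x y) x = RightRack.mul x y) ↔
      (∀ x y : Q, RightRack.mul x (RightRack.mul y x) = RightRack.mul x y) :=
  forall₂_congr fun x y => by rw [RightQuandle.flexible]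
end

section
/- Let Q be a quandle. The right multiplication group Rmlt(Q) is abelian if and only if Q is both medial and graphic. -/
/-!
`Rmlt(Q)` is abelian iff its generators commute, i.e. iff the operation is right-commutative:
`(z ◃ x) ◃ y = (z ◃ y) ◃ x`. In a right-commutative rack, writing `a = (a / y) ◃ y` and
distributing shows `a ◃ (v ◃ y) = a ◃ v`; mediality follows at once, and graphicness from
idempotence. Conversely, in a medial graphic quandle, right-multiplying by `z = z ◃ z` lets
mediality and graphicness swap the two right factors, and `R_z` is injective.
-/

open RightRack

local infixl:70 " ◃ " => RightRack.mul

namespace RightRack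

variable {Q : Type*} [RightRack Q]

theorem rt_apply (x y : Q) : rt x y = y ◃ x := rfl

theorem commute_rt_iff {x y : Q} : Commute (rt x) (rt y) ↔ ∀ z : Q, z ◃ y ◃ x = z ◃ x ◃ y :=
  Equiv.ext_iff

theorem rmlt_comm_iff_rightCommutative :
    (∀ g ∈ rmlt Q, ∀ h ∈ rmlt Q, g * h = h * g) ↔ RightCommutative (mul : Q → Q → Q) := by
  constructor
  · intro hcomm
    refine ⟨fun z x y => ?_⟩
    have hxy := hcomm (rt y) (Subgroup.subset_closure ⟨y, rfl⟩) (rt x)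
      (Subgroup.subset_closure ⟨x, rfl⟩)
    exact commute_rt_iff.mp hxy z
  · intro hrc g hg h hh
    have hgen : ∀ σ ∈ Set.range (rt : Q → Equiv.Perm Q), ∀ τ ∈ Set.range (rt : Q → Equiv.Perm Q),
        σ * τ = τ * σ := by
      rintro _ ⟨x, rfl⟩ _ ⟨y, rfl⟩
      exact commute_rt_iff.mpr fun z => hrc.right_comm z y x
    exact Set.centralizer_centralizer_comm_of_comm hgen g
      (Subgroup.closure_le_centralizer_centralizer _ hg) h
      (Subgroup.closure_le_centralizer_centralizer _ hh)

section RightCommutative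

variable [RightCommutative (mul : Q → Q → Q)]

theorem mul_mul_right_eq_mul (a v y : Q) : a ◃ (v ◃ y) = a ◃ v := by
  calc a ◃ (v ◃ y) = div a y ◃ y ◃ (v ◃ y) := by rw [div_mul]
    _ = div a y ◃ v ◃ y := (self_distrib _ _ _).symm
    _ = div a y ◃ y ◃ v := RightCommutative.right_comm _ _ _
    _ = a ◃ v := by rw [div_mul]

theorem medial_of_rightCommutative (x u v y : Q) : x ◃ u ◃ (v ◃ y) = x ◃ v ◃ (u ◃ y) := by
  rw [mul_mul_right_eq_mul, mul_mul_right_eq_mul]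
  exact RightCommutative.right_comm x u v

end RightCommutative

end RightRack

namespace RightQuandle

variable {Q : Type*} [RightQuandle Q]

theorem graphic_of_rightCommutative [RightCommutative (mul : Q → Q → Q)] (x y : Q) :
    x ◃ y ◃ x = x ◃ y := by
  rw [RightCommutative.right_comm (op := mul) x y x, idem]

theorem rightCommutative_of_medial_of_graphic
    (hm : ∀ x u v y : Q, x ◃ u ◃ (v ◃ y) = x ◃ v ◃ (u ◃ y)) (hg : ∀ x y : Q, x ◃ y ◃ x = x ◃ y) :
    RightCommutative (mul : Q → Q → Q) := by
  refine ⟨fun z x y => (rt z).injective ?_⟩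
  simp only [rt_apply]
  calc z ◃ x ◃ y ◃ z = z ◃ x ◃ y ◃ (z ◃ z) := by rw [idem]
    _ = z ◃ x ◃ z ◃ (y ◃ z) := hm _ _ _ _
    _ = z ◃ x ◃ (y ◃ z) := by rw [hg]
    _ = z ◃ y ◃ (x ◃ z) := hm _ _ _ _
    _ = z ◃ y ◃ z ◃ (x ◃ z) := by rw [hg]
    _ = z ◃ y ◃ x ◃ (z ◃ z) := (hm _ _ _ _).symm
    _ = z ◃ y ◃ x ◃ z := by rw [idem]

end RightQuandle

/-- Let `Q` be a quandle. The right multiplication group `Rmlt(Q)` is abelian if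
and only if `Q` is both medial (`(x*u)*(v*y) = (x*v)*(u*y)`) and graphic
(`(x*y)*x = x*y`). -/
theorem quandle_rmlt_abelian_iff_medial_graphic {Q : Type*} [RightQuandle Q] :
    (∀ g ∈ RightRack.rmlt Q, ∀ h ∈ RightRack.rmlt Q, g * h = h * g) ↔
      ((∀ x u v y : Q, RightRack.mul (RightRack.mul x u) (RightRack.mul v y)
          = RightRack.mul (RightRack.mul x v) (RightRack.mul u y)) ∧
        (∀ x y : Q, RightRack.mul (RightRack.mul x y) x = RightRack.mul x y)) := by
  rw [rmlt_comm_iff_rightCommutative]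
  constructor
  · intro hrc
    exact ⟨medial_of_rightCommutative, RightQuandle.graphic_of_rightCommutative⟩
  · rintro ⟨hm, hg⟩
    exact RightQuandle.rightCommutative_of_medial_of_graphic hm hg
end

section
/- For a magma Q the following are equivalent: (i) Q is a connected rack whose right multiplication group Rmlt(Q) is abelian; (ii) Q is a permutational magma Q(f) for some permutation f of Q such that the cyclic group generated by f acts transitively on Q. -/
/-!
Right self-distributivity says `R (y * z) = R z * R y * (R z)⁻¹`, so every `g ∈ Rmlt(Q)` satisfies
`R (g y) = g * R y * g⁻¹`. If `Rmlt(Q)` is abelian this gives `R (g y) = R y`, and transitivity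
then makes all right translations one permutation `f`, i.e. `Q = Q(f)` with `Rmlt(Q) = ⟨f⟩`.
Conversely `Q(f)` is trivially a rack, and its right multiplication group lies in `⟨f⟩`.
-/

section

variable {Q : Type*} {mul : Q → Q → Q}

def rightTranslations (mul : Q → Q → Q) : Set (Equiv.Perm Q) :=
  {σ | ∃ x, ∀ y, σ y = mul y x}

lemma mem_rightTranslations_of_permutational {f : Equiv.Perm Q} (hf : ∀ x y, mul x y = f x)
    (a : Q) : f ∈ rightTranslations mul :=
  ⟨a, fun y => (hf y a).symm⟩

lemma closure_rightTranslations_le_zpowers {f : Equiv.Perm Q} (hf : ∀ x y, mul x y = f x) :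
    Subgroup.closure (rightTranslations mul) ≤ Subgroup.zpowers f := by
  rw [Subgroup.closure_le]
  rintro σ ⟨x, hx⟩
  obtain rfl : σ = f := Equiv.ext fun y => (hx y).trans (hf y x)
  exact Subgroup.mem_zpowers σ

section RightQuasigroup

variable (hbij : ∀ x, Function.Bijective fun y => mul y x)
include hbij

noncomputable def rightTranslation (x : Q) : Equiv.Perm Q :=
  Equiv.ofBijective _ (hbij x)

lemma rightTranslation_mem_closure (x : Q) :
    rightTranslation hbij x ∈ Subgroup.closure (rightTranslations mul) :=
  Subgroup.subset_closure ⟨x, fun _ => rfl⟩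

lemma eq_rightTranslation_of_mem {σ : Equiv.Perm Q} (hσ : σ ∈ rightTranslations mul) :
    ∃ x, σ = rightTranslation hbij x := by
  obtain ⟨x, hx⟩ := hσ
  exact ⟨x, Equiv.ext hx⟩

variable (hdist : ∀ x y z, mul (mul x y) z = mul (mul x z) (mul y z))
include hdist

lemma rightTranslation_mul (y z : Q) :
    rightTranslation hbij (mul y z) =
      rightTranslation hbij z * rightTranslation hbij y * (rightTranslation hbij z)⁻¹ := by
  ext x
  obtain ⟨w, rfl⟩ := (hbij z).2 x
  have hw : (rightTranslation hbij z)⁻¹ (mul w z) = w :=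
    (rightTranslation hbij z).symm_apply_apply w
  simp only [Equiv.Perm.mul_apply, hw]
  exact (hdist w y z).symm

lemma rightTranslation_apply_of_mem_closure {g : Equiv.Perm Q}
    (hg : g ∈ Subgroup.closure (rightTranslations mul)) (y : Q) :
    rightTranslation hbij (g y) = g * rightTranslation hbij y * g⁻¹ := by
  induction hg using Subgroup.closure_induction generalizing y with
  | mem σ hσ =>
    obtain ⟨x, rfl⟩ := eq_rightTranslation_of_mem hbij hσ
    exact rightTranslation_mul hbij hdist y x
  | one => simp
  | mul g h _ _ ihg ihh =>
    rw [Equiv.Perm.mul_apply, ihg, ihh]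
    group
  | inv g _ ih =>
    have h := ih (g⁻¹ y)
    rw [show g (g⁻¹ y) = y from g.apply_symm_apply y] at h
    rw [h]
    group

lemma rightTranslation_eq_of_transitive_of_commute
    (htrans : ∀ a b : Q, ∃ g ∈ Subgroup.closure (rightTranslations mul), g a = b)
    (hcomm : ∀ g ∈ Subgroup.closure (rightTranslations mul),
      ∀ h ∈ Subgroup.closure (rightTranslations mul), g * h = h * g)
    (x y : Q) : rightTranslation hbij x = rightTranslation hbij y := by
  obtain ⟨g, hg, rfl⟩ := htrans x y
  rw [rightTranslation_apply_of_mem_closure hbij hdist hg,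
    hcomm g hg _ (rightTranslation_mem_closure hbij x), mul_inv_cancel_right]

end RightQuasigroup

end

/-- For a magma `Q` the following are equivalent: (i) `Q` is a connected rack
(every right translation is a bijection, the operation is right self-distributive,
and the right multiplication group — the subgroup of the symmetric group on `Q`
generated by the permutations agreeing with right translations — acts transitively
on `Q`) whose right multiplication group is abelian; (ii) `Q` is a permutational
magma `Q(f)` for some permutation `f` such that the cyclic group generated by `f`
acts transitively on `Q`. -/
theorem connected_rack_abelian_rmlt_iff_permutational {Q : Type*} (mul : Q → Q → Q) :
    ((∀ x : Q, Function.Bijective fun y => mul y x) ∧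
      (∀ x y z : Q, mul (mul x y) z = mul (mul x z) (mul y z)) ∧
      (∀ a b : Q,
        ∃ g ∈ Subgroup.closure {σ : Equiv.Perm Q | ∃ x : Q, ∀ y : Q, σ y = mul y x},
          g a = b) ∧
      (∀ g ∈ Subgroup.closure {σ : Equiv.Perm Q | ∃ x : Q, ∀ y : Q, σ y = mul y x},
        ∀ h ∈ Subgroup.closure {σ : Equiv.Perm Q | ∃ x : Q, ∀ y : Q, σ y = mul y x},
          g * h = h * g)) ↔
      (∃ f : Equiv.Perm Q, (∀ x y : Q, mul x y = f x) ∧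
        ∀ a b : Q, ∃ n : ℤ, (f ^ n) a = b) := by
  constructor
  · rintro ⟨hbij, hdist, htrans, hcomm⟩
    obtain hQ | ⟨⟨a₀⟩⟩ := isEmpty_or_nonempty Q
    · exact ⟨1, fun x => isEmptyElim x, fun a => isEmptyElim a⟩
    have hf : ∀ x y, mul x y = rightTranslation hbij a₀ x := fun x y =>
      congrArg (· x) (rightTranslation_eq_of_transitive_of_commute hbij hdist htrans hcomm y a₀)
    refine ⟨_, hf, fun a b => ?_⟩
    obtain ⟨g, hg, rfl⟩ := htrans a b
    obtain ⟨n, rfl⟩ := closure_rightTranslations_le_zpowers hf hg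
    exact ⟨n, rfl⟩
  · rintro ⟨f, hf, hcyclic⟩
    have hle := closure_rightTranslations_le_zpowers hf
    refine ⟨fun x => by simpa only [hf] using f.bijective, fun x y z => by simp only [hf],
      fun a b => ?_, fun g hg h hh => ?_⟩
    · obtain ⟨n, hn⟩ := hcyclic a b
      exact ⟨f ^ n, zpow_mem (Subgroup.subset_closure
        (mem_rightTranslations_of_permutational hf a)) n, hn⟩
    · obtain ⟨m, rfl⟩ := hle hg
      obtain ⟨n, rfl⟩ := hle hh
      exact zpow_mul_comm f m n
end

section
/- Let Q be a rack and A a subset of Q. Then the subgroup of the symmetric group on Q generated by the right translations R_a with a in A equals the subgroup generated by the right translations R_x with x in the subrack ⟨A⟩ generated by A. -/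
/-- The subrack `⟨A⟩` generated by a subset `A` of a rack: the smallest subset of
`Q` containing `A` and closed under both `*` and `/`. -/
def subrackClosure {Q : Type*} [RightRack Q] (A : Set Q) : Set Q :=
  ⋂₀ {S : Set Q | A ⊆ S ∧ (∀ x ∈ S, ∀ y ∈ S, RightRack.mul x y ∈ S) ∧
      (∀ x ∈ S, ∀ y ∈ S, RightRack.div x y ∈ S)}

/-!
Since `R_{x*y} = R_y R_x R_y⁻¹` and `R_{x/y} = R_y⁻¹ R_x R_y`, for every subgroup `G` of the
symmetric group the set `{x | R_x ∈ G}` is closed under `*` and `/`. Taking for `G` the subgroup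
generated by the `R_a` with `a ∈ A`, this set is a subrack containing `A`, hence contains `⟨A⟩`.
-/

namespace RightRack

variable {Q : Type*} [RightRack Q]

theorem rt_mul (x y : Q) : rt (mul x y) = rt y * rt x * (rt y)⁻¹ := by
  ext z
  simp only [rt, Equiv.Perm.mul_apply, Equiv.coe_fn_mk, Equiv.Perm.inv_def, Equiv.coe_fn_symm_mk]
  rw [self_distrib, div_mul]

theorem rt_div (x y : Q) : rt (div x y) = (rt y)⁻¹ * rt x * rt y := by
  conv_rhs => rw [← div_mul x y, rt_mul]
  group

end RightRack

open RightRack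

section

variable {Q : Type*} [RightRack Q]

theorem subset_subrackClosure (A : Set Q) : A ⊆ subrackClosure A :=
  fun _ ha _ hS => hS.1 ha

theorem subrackClosure_subset {A S : Set Q} (hAS : A ⊆ S)
    (hmul : ∀ x ∈ S, ∀ y ∈ S, mul x y ∈ S) (hdiv : ∀ x ∈ S, ∀ y ∈ S, div x y ∈ S) :
    subrackClosure A ⊆ S :=
  Set.sInter_subset_of_mem ⟨hAS, hmul, hdiv⟩

theorem image_rt_subrackClosure_subset {A : Set Q} {G : Subgroup (Equiv.Perm Q)}
    (hA : rt '' A ⊆ G) : rt '' subrackClosure A ⊆ G := by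
  rw [Set.image_subset_iff]
  refine subrackClosure_subset (Set.image_subset_iff.1 hA) ?_ ?_
  · intro x hx y hy
    change rt (mul x y) ∈ G
    rw [rt_mul]
    exact mul_mem (mul_mem hy hx) (inv_mem hy)
  · intro x hx y hy
    change rt (div x y) ∈ G
    rw [rt_div]
    exact mul_mem (mul_mem (inv_mem hy) hx) hy

end

/-- Let `Q` be a rack and `A ⊆ Q`. The subgroup of the symmetric group on `Q`
generated by the right translations `R_a` with `a ∈ A` equals the subgroup
generated by the right translations `R_x` with `x` in the subrack `⟨A⟩`
generated by `A`. -/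
theorem closure_rt_image_eq_closure_rt_subrack {Q : Type*} [RightRack Q] (A : Set Q) :
    Subgroup.closure ((RightRack.rt : Q → Equiv.Perm Q) '' A)
      = Subgroup.closure ((RightRack.rt : Q → Equiv.Perm Q) '' subrackClosure A) :=
  le_antisymm (Subgroup.closure_mono (Set.image_mono (subset_subrackClosure A)))
    (Subgroup.closure_le _ |>.2 (image_rt_subrackClosure_subset Subgroup.subset_closure))
end

section
/- Let Q be a connected quandle with more than one element and let C be an R-clique of Q. Then C is a proper subset of Q. -/
/-- The R-commuting relation: `a ∼ b` iff `R_a ∘ R_b = R_b ∘ R_a`. -/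
def rsim {Q : Type*} [RightRack Q] (a b : Q) : Prop :=
  ∀ y : Q, RightRack.mul (RightRack.mul y b) a = RightRack.mul (RightRack.mul y a) b

/-- Let `Q` be a connected quandle (the right multiplication group acts
transitively on `Q`) with more than one element and let `C` be an R-clique of
`Q`. Then `C` is a proper subset of `Q`. -/
theorem rclique_proper_in_connected_quandle {Q : Type*} [RightQuandle Q]
    (hbig : ∃ a b : Q, a ≠ b)
    (hconn : ∀ a b : Q, ∃ g ∈ RightRack.rmlt Q, g a = b)
    (C : Set Q) (hC : ∀ a ∈ C, ∀ b ∈ C, rsim a b) :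
    C ⊂ Set.univ := by
  open RightRack in
  rw [Set.ssubset_univ_iff]
  intro hCuniv
  subst hCuniv
  have hsim : ∀ a b : Q, rsim a b := fun a b =>
    hC a (Set.mem_univ a) b (Set.mem_univ b)
  -- Step B : rt (mul x y) = rt x
  have hB : ∀ x y : Q, rt (mul x y) = rt x := by
    intro x y
    apply Equiv.ext
    intro z
    have hz : mul (div z y) y = z := div_mul z y
    show mul z (mul x y) = mul z x
    calc mul z (mul x y) = mul (mul (div z y) y) (mul x y) := by rw [hz]
      _ = mul (mul (div z y) x) y := (self_distrib (div z y) x y).symm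
      _ = mul (mul (div z y) y) x := (hsim x y (div z y)).symm
      _ = mul z x := by rw [hz]
  -- Step C : elements of rmlt preserve rt
  have hCinv : ∀ g ∈ rmlt Q, ∀ x : Q, rt (g x) = rt x := by
    intro g hg
    induction hg using Subgroup.closure_induction with
    | mem g hg =>
        obtain ⟨y, rfl⟩ := hg
        intro x
        exact hB x y
    | one => intro x; rfl
    | mul g h _ _ hgP hhP => intro x; rw [Equiv.Perm.mul_apply, hgP, hhP]
    | inv g _ hgP =>
        intro x
        have := hgP (g⁻¹ x)
        rw [show g (g⁻¹ x) = x from Equiv.apply_symm_apply g x] at this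
        exact this.symm
  -- Step D : all right translations coincide
  have hD : ∀ a b : Q, rt a = rt b := by
    intro a b
    obtain ⟨g, hg, hga⟩ := hconn a b
    rw [← hga]
    exact (hCinv g hg a).symm
  -- Step E : mul a b = a
  have hE : ∀ a b : Q, mul a b = a := by
    intro a b
    have := congrArg (fun e : Equiv.Perm Q => e a) (hD b a)
    simp only [rt, Equiv.coe_fn_mk] at this
    rw [show mul a b = rt b a from rfl, hD b a]
    exact RightQuandle.idem a
  -- Step F : rt x = 1
  have hF : ∀ x : Q, rt x = 1 := by
    intro x
    apply Equiv.ext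
    intro z
    exact hE z x
  -- Step G : rmlt is trivial, contradiction
  have hG : rmlt Q ≤ ⊥ := by
    rw [rmlt, Subgroup.closure_le]
    rintro g ⟨x, rfl⟩
    simp [hF x]
  obtain ⟨a, b, hab⟩ := hbig
  obtain ⟨g, hg, hga⟩ := hconn a b
  have : g = 1 := Subgroup.mem_bot.mp (hG hg)
  rw [this] at hga
  exact hab hga
end

section
/- For every m ≥ 1 and every e in (ℤ/2ℤ)^m, the quandle Q_m(e) is connected; that is, the subgroup of the symmetric group on Q_m(e) generated by all right translations acts transitively on Q_m(e). -/
/-- The operation of the magma `Q_m(e)` on `(ℤ/3ℤ) × (ℤ/2ℤ)^m`: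
`(i,a)*(j,b) = (-i-j, a)` if `i-j ≡ 0`, `(-i-j, a+b)` if `i-j ≡ 1`, and
`(-i-j, a+b+e)` if `i-j ≡ 2 (mod 3)`. -/
def qop (m : ℕ) (e : Fin m → ZMod 2) (x y : ZMod 3 × (Fin m → ZMod 2)) :
    ZMod 3 × (Fin m → ZMod 2) :=
  if x.1 - y.1 = 0 then (-x.1 - y.1, x.2)
  else if x.1 - y.1 = 1 then (-x.1 - y.1, x.2 + y.2)
  else (-x.1 - y.1, x.2 + y.2 + e)

/-!
The right translation by `(i - 1, a + c)` sends `(i, a)` to `(i + 1, c)`, because `i - (i - 1) = 1`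
and `a + a = 0` in characteristic 2. So from any point one reaches, inside `Rmlt(Q_m(e))`, every
point of the next layer `{i + 1} × (ℤ/2ℤ)^m`, and iterating this reaches every layer.
-/

namespace QopQuandle

variable {m : ℕ} (e : Fin m → ZMod 2)

abbrev Carrier (m : ℕ) := ZMod 3 × (Fin m → ZMod 2)

def rightTranslations : Set (Equiv.Perm (Carrier m)) :=
  {σ | ∃ x : Carrier m, ∀ y, σ y = qop m e y x}

lemma qop_fst (x y : Carrier m) : (qop m e y x).1 = -y.1 - x.1 := by
  unfold qop; split_ifs <;> rfl

lemma qop_snd_sub_eq_of_fst_eq (x : Carrier m) {y y' : Carrier m} (h : y.1 = y'.1) :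
    (qop m e y x).2 - y.2 = (qop m e y' x).2 - y'.2 := by
  unfold qop
  rw [h]
  split_ifs <;> simp only [sub_self, add_assoc, add_sub_cancel_left]

lemma qop_left_injective (x : Carrier m) : Function.Injective (fun y => qop m e y x) := by
  intro y y' h
  have hfst : y.1 = y'.1 := by
    simpa [qop_fst] using congrArg Prod.fst h
  have hsnd := qop_snd_sub_eq_of_fst_eq e x hfst
  simp only [h, sub_right_inj] at hsnd
  exact Prod.ext hfst hsnd

noncomputable def rightTranslation (x : Carrier m) : Equiv.Perm (Carrier m) :=
  Equiv.ofBijective _ (Finite.injective_iff_bijective.mp (qop_left_injective e x))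

lemma rightTranslation_mem_closure (x : Carrier m) :
    rightTranslation e x ∈ Subgroup.closure (rightTranslations e) :=
  Subgroup.subset_closure ⟨x, fun _ => rfl⟩

lemma qop_sub_one_add (p : Carrier m) (c : Fin m → ZMod 2) :
    qop m e p (p.1 - 1, p.2 + c) = (p.1 + 1, c) := by
  have hdiff : p.1 - (p.1 - 1) = 1 := sub_sub_cancel p.1 1
  have hfst : ∀ i : ZMod 3, -i - (i - 1) = i + 1 := by decide
  have hsnd : p.2 + (p.2 + c) = c := by
    rw [← add_assoc, ZModModule.add_self, zero_add]
  simp only [qop, hdiff, one_ne_zero, if_false, if_true, hfst, hsnd]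

lemma exists_mem_closure_apply_eq_succ (p : Carrier m) (c : Fin m → ZMod 2) :
    ∃ g ∈ Subgroup.closure (rightTranslations e), g p = (p.1 + 1, c) :=
  ⟨rightTranslation e (p.1 - 1, p.2 + c), rightTranslation_mem_closure e _,
    qop_sub_one_add e p c⟩

lemma exists_mem_closure_apply_eq_add_succ (k : ℕ) (p : Carrier m) (c : Fin m → ZMod 2) :
    ∃ g ∈ Subgroup.closure (rightTranslations e), g p = (p.1 + (k + 1), c) := by
  induction k generalizing c with
  | zero => simpa using exists_mem_closure_apply_eq_succ e p c
  | succ k ih =>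
    obtain ⟨g, hg, hgp⟩ := ih 0
    obtain ⟨h, hh, hhp⟩ := exists_mem_closure_apply_eq_succ e (g p) c
    refine ⟨h * g, mul_mem hh hg, ?_⟩
    rw [Equiv.Perm.mul_apply, hhp, hgp]
    exact Prod.ext (by push_cast; ring) rfl

end QopQuandle

open QopQuandle in
theorem qop_connected_general (m : ℕ) (e : Fin m → ZMod 2) :
    ∀ a b : ZMod 3 × (Fin m → ZMod 2),
      ∃ g ∈ Subgroup.closure
          {σ : Equiv.Perm (ZMod 3 × (Fin m → ZMod 2)) |
            ∃ x : ZMod 3 × (Fin m → ZMod 2), ∀ y, σ y = qop m e y x},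
        g a = b := by
  intro a b
  obtain ⟨g, hg, hga⟩ :=
    exists_mem_closure_apply_eq_add_succ e (b.1 - a.1 - 1).val a b.2
  refine ⟨g, hg, hga.trans ?_⟩
  rw [ZMod.natCast_zmod_val]
  exact Prod.ext (by ring) rfl

/-- For every `m ≥ 1` and every `e ∈ (ℤ/2ℤ)^m`, the quandle `Q_m(e)` is
connected: the subgroup of the symmetric group on `Q_m(e)` generated by all
right translations acts transitively on `Q_m(e)`. -/
theorem qop_connected (m : ℕ) (hm : 1 ≤ m) (e : Fin m → ZMod 2) :
    ∀ a b : ZMod 3 × (Fin m → ZMod 2),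
      ∃ g ∈ Subgroup.closure
          {σ : Equiv.Perm (ZMod 3 × (Fin m → ZMod 2)) |
            ∃ x : ZMod 3 × (Fin m → ZMod 2), ∀ y, σ y = qop m e y x},
        g a = b :=
  qop_connected_general m e
end
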